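/- Let K be a 5×5 complex matrix all of whose entries are 5th roots of unity and whose 0th row and 0th column consist entirely of 1's. Suppose there exist pairwise distinct indices j, j', j'' ∈ {1,2,3,4} and permutations τ, τ' of {1,2,3,4} with τ∘τ = id and τ'∘τ' = id such that K[j,l] = K[j',τ(l)] and K[j,l] = K[j'',τ'(l)] for all l ∈ {1,2,3,4} (i.e., row j pairs up with both row j' and row j''). Then (1/√5)·K is not a Hadamard matrix, i.e. (1/√5)·K is not unitary. -/

import Mathlib

open Matrix Complex

/-!
Write the entries of row `j` as `ψ (e l)`, where `ψ` is the standard additive character of `ZMod 5`.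
As the minimal polynomial of a primitive `p`-th root of unity is `1 + X + ⋯ + X ^ (p - 1)`, the only
vanishing sums of `p` (not necessarily distinct) `p`-th roots of unity are the sums of all of them.
Hence orthogonality of two rows with entries `ψ (f l)` and `ψ (g l)` makes `f - g` a bijection onto
`ZMod 5`. Orthogonality to row `0` makes `e` a bijection; transporting `τ` along `e` gives an
involution `π` of `ZMod 5` fixing `0` with `k ↦ k - π k` bijective, and a finite check shows that
`π` is negation. So `τ` and `τ'` act alike, rows `j'` and `j''` coincide, and they cannot be
orthogonal.
-/

open Function Polynomial Finset

namespace AddChar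

theorem apply_eq_pow_val {n : ℕ} [NeZero n] {M : Type*} [Monoid M] (ψ : AddChar (ZMod n) M)
    (k : ZMod n) : ψ k = ψ 1 ^ k.val := by
  rw [← map_nsmul_eq_pow, nsmul_one, ZMod.natCast_zmod_val]

theorem exists_apply_eq_of_pow_eq_one {R : Type*} [CommRing R] [IsDomain R] {n : ℕ} [NeZero n]
    {ψ : AddChar (ZMod n) R} (hψ : IsPrimitiveRoot (ψ 1) n) {x : R} (hx : x ^ n = 1) :
    ∃ k, ψ k = x := by
  obtain ⟨i, -, rfl⟩ := hψ.eq_pow_of_pow_eq_one hx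
  exact ⟨i, by rw [← map_nsmul_eq_pow, nsmul_one]⟩

variable {p : ℕ} [hp : Fact p.Prime] {K : Type*} [Field K] [CharZero K]
  {ψ : AddChar (ZMod p) K}

theorem eq_of_sum_mul_eq_zero (hψ : IsPrimitiveRoot (ψ 1) p) {c : ZMod p → ℚ}
    (h : ∑ k, (c k : K) * ψ k = 0) (a b : ZMod p) : c a = c b := by
  set P : ℚ[X] := ∑ k, C (c k) * X ^ k.val
  have hcoeff (k : ZMod p) : P.coeff k.val = c k := by
    simp [P, finsetSum_coeff, ZMod.val_injective p |>.eq_iff]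
  have hdeg : P.natDegree ≤ p - 1 := natDegree_sum_le_of_forall_le _ _ fun k _ ↦
    (natDegree_C_mul_X_pow_le _ _).trans (Nat.le_sub_one_of_lt (ZMod.val_lt k))
  obtain ⟨q, hq⟩ : cyclotomic p ℚ ∣ P := by
    rw [cyclotomic_eq_minpoly_rat hψ hp.out.pos]
    refine minpoly.dvd ℚ _ ?_
    simpa [P, map_sum, ← apply_eq_pow_val] using h
  obtain ⟨r, rfl⟩ : ∃ r, q = C r := by
    by_cases hq0 : q = 0
    · exact ⟨0, by simp [hq0]⟩
    rw [hq, natDegree_mul (cyclotomic_ne_zero p ℚ) hq0, natDegree_cyclotomic,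
      Nat.totient_prime hp.out] at hdeg
    exact ⟨_, eq_C_of_natDegree_eq_zero (by omega)⟩
  have hconst (k : ZMod p) : c k = r := by
    rw [← hcoeff, hq, coeff_mul_C, cyclotomic_prime, finsetSum_coeff]
    simp [coeff_X_pow, ZMod.val_lt k]
  rw [hconst, hconst]

theorem bijective_of_sum_eq_zero (hψ : IsPrimitiveRoot (ψ 1) p) {ι : Type*} [Fintype ι]
    (hcard : Fintype.card ι = p) {f : ι → ZMod p} (h : ∑ i, ψ (f i) = 0) : Bijective f := by
  classical
  set n : ZMod p → ℕ := fun k ↦ #{i | f i = k}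
  have hn : ∑ k, ((n k : ℚ) : K) * ψ k = 0 := by
    rw [← h, ← sum_fiberwise univ f]
    refine sum_congr rfl fun k _ ↦ ?_
    rw [sum_congr rfl fun i hi ↦ by rw [(mem_filter.1 hi).2], sum_const, nsmul_eq_mul]
    simp [n]
  refine (Fintype.bijective_iff_surjective_and_card f).2 ⟨fun k ↦ ?_, by simp [hcard]⟩
  by_contra! hk
  obtain ⟨i⟩ : Nonempty ι := Fintype.card_pos_iff.1 (hcard ▸ hp.out.pos)
  have hk0 : n k = 0 := card_eq_zero.2 (filter_eq_empty_iff.2 fun i _ ↦ hk i)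
  have hfi : 0 < n (f i) := card_pos.2 ⟨i, by simp⟩
  have := eq_of_sum_mul_eq_zero hψ hn k (f i)
  rw [hk0] at this
  exact hfi.ne (by exact_mod_cast this)

end AddChar

theorem ZMod.isPrimitiveRoot_stdAddChar_one (N : ℕ) [NeZero N] :
    IsPrimitiveRoot (stdAddChar (1 : ZMod N)) N := by
  rw [← Int.cast_one, stdAddChar_coe]
  simpa using isPrimitiveRoot_exp N (NeZero.ne N)

theorem ZMod.eq_neg_of_involutive_of_injective_sub {π : ZMod 5 → ZMod 5} (h0 : π 0 = 0)
    (hπ : Involutive π) (hσ : Injective fun k ↦ k - π k) : π = Neg.neg := by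
  refine funext fun k ↦ ?_
  -- as a table of its four nonzero values, `π` ranges over only `5 ^ 4` candidates for `decide`
  obtain ⟨a, b, c, d, rfl⟩ :
      ∃ a b c d : ZMod 5, π = fun k ↦ (![0, a, b, c, d] : Fin 5 → ZMod 5) k :=
    ⟨π 1, π 2, π 3, π 4, funext fun k ↦ by fin_cases k <;> first | exact h0 | rfl⟩
  clear h0
  unfold Involutive at hπ
  revert a b c d k
  decide +kernel

theorem Function.Involutive.apply_eq_neg_of_injective_sub {α : Type*} (e : α ≃ ZMod 5)
    {τ : α → α} (hτ : Involutive τ) {a : α} (ha : e a = 0) (hτa : τ a = a)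
    (h : Injective fun l ↦ e l - e (τ l)) (l : α) : e (τ l) = -e l := by
  have hπ := ZMod.eq_neg_of_involutive_of_injective_sub (π := e ∘ τ ∘ e.symm)
    (by simp [e.symm_apply_eq.2 ha.symm, hτa, ha]) (fun k ↦ by simp [hτ _])
    (by simpa [comp_def] using h.comp e.symm.injective)
  simpa using congr_fun hπ (e l)

theorem Function.Involutive.eq_comp_of_forall_ne_zero {α M : Type*} [Zero α] {σ : α → α}
    (hσ : Involutive σ) (hσ0 : σ 0 = 0) {a b : α → M} (h0 : a 0 = b 0)
    (h : ∀ l, l ≠ 0 → a l = b (σ l)) : b = a ∘ σ := by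
  funext l
  rcases eq_or_ne (σ l) 0 with hl | hl
  · obtain rfl : l = 0 := by rw [← hσ l, hl, hσ0]
    rw [comp_apply, hσ0, h0]
  · rw [comp_apply, h _ hl, hσ l]

theorem Matrix.mul_conjTranspose_apply_eq_zero_of_smul {n R : Type*} [Fintype n] [DecidableEq n]
    [Field R] [StarRing R] {c : R} (hc : c ≠ 0) {M : Matrix n n R}
    (h : (c • M) * (c • M)ᴴ = 1) {p q : n} (hpq : p ≠ q) : (M * Mᴴ) p q = 0 := by
  rw [conjTranspose_smul, smul_mul, Matrix.mul_smul, smul_smul] at h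
  have := congr_fun₂ h p q
  rw [smul_apply, one_apply_ne hpq, smul_eq_mul] at this
  exact (mul_eq_zero.1 this).resolve_left (mul_ne_zero hc (star_ne_zero.2 hc))

theorem Matrix.bijective_sub_of_smul_mul_conjTranspose_eq_one {p : ℕ} [Fact p.Prime]
    {n : Type*} [Fintype n] [DecidableEq n] (hcard : Fintype.card n = p)
    {ψ : AddChar (ZMod p) ℂ} (hψ : IsPrimitiveRoot (ψ 1) p) {c : ℂ} (hc : c ≠ 0)
    {M : Matrix n n ℂ} (hM : (c • M) * (c • M)ᴴ = 1) {a b : n} (hab : a ≠ b)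
    {f g : n → ZMod p} (hf : ∀ l, M a l = ψ (f l)) (hg : ∀ l, M b l = ψ (g l)) :
    Bijective fun l ↦ f l - g l := by
  refine AddChar.bijective_of_sum_eq_zero hψ hcard ?_
  simpa [mul_apply, hf, hg, sub_eq_add_neg, AddChar.map_add_eq_mul, AddChar.map_neg_eq_conj]
    using mul_conjTranspose_apply_eq_zero_of_smul hc hM hab

theorem pairup_twice_not_hadamard
    (K : Matrix (Fin 5) (Fin 5) ℂ)
    (hroot : ∀ i j, K i j ^ 5 = 1)
    (hrow : ∀ j, K 0 j = 1) (hcol : ∀ i, K i 0 = 1)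
    (j j' j'' : Fin 5) (h1 : j ≠ j') (h2 : j ≠ j'') (h3 : j' ≠ j'')
    (hj : j ≠ 0)
    (τ τ' : Equiv.Perm (Fin 5)) (hτ0 : τ 0 = 0) (hτ'0 : τ' 0 = 0)
    (hτ2 : ∀ l, τ (τ l) = l) (hτ'2 : ∀ l, τ' (τ' l) = l)
    (hpair : ∀ l : Fin 5, l ≠ 0 → K j l = K j' (τ l))
    (hpair' : ∀ l : Fin 5, l ≠ 0 → K j l = K j'' (τ' l)) :
    ¬ ((((Real.sqrt 5 : ℂ))⁻¹ • K) * (((Real.sqrt 5 : ℂ))⁻¹ • K)ᴴ = 1 ∧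
       (((Real.sqrt 5 : ℂ))⁻¹ • K)ᴴ * (((Real.sqrt 5 : ℂ))⁻¹ • K) = 1) := by
  rintro ⟨hu, -⟩
  have : Fact (Nat.Prime 5) := ⟨Nat.prime_five⟩
  have hψ := ZMod.isPrimitiveRoot_stdAddChar_one 5
  have hsub {a b : Fin 5} {f g : Fin 5 → ZMod 5} (hab : a ≠ b)
      (hf : ∀ l, K a l = ZMod.stdAddChar (f l)) (hg : ∀ l, K b l = ZMod.stdAddChar (g l)) :
      Bijective fun l ↦ f l - g l :=
    bijective_sub_of_smul_mul_conjTranspose_eq_one (by simp) hψ (by simp) hu hab hf hg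
  obtain ⟨e, hKj⟩ : ∃ e : Fin 5 → ZMod 5, ∀ l, K j l = ZMod.stdAddChar (e l) := by
    choose e he using fun l ↦ AddChar.exists_apply_eq_of_pow_eq_one hψ (hroot j l)
    exact ⟨e, fun l ↦ (he l).symm⟩
  have he0 : e 0 = 0 := ZMod.injective_stdAddChar (by rw [← hKj, hcol, AddChar.map_zero_eq_one])
  have hrow_of_pair {i : Fin 5} {σ : Equiv.Perm (Fin 5)} (hσ2 : Involutive σ) (hσ0 : σ 0 = 0)
      (hσ : ∀ l, l ≠ 0 → K j l = K i (σ l)) (l : Fin 5) :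
      K i l = ZMod.stdAddChar (e (σ l)) := by
    rw [hσ2.eq_comp_of_forall_ne_zero hσ0 ((hcol j).trans (hcol i).symm) hσ, Function.comp_apply,
      hKj]
  have hE : Bijective e := by simpa using hsub hj (g := 0) hKj (by simp [hrow])
  have hneg {i : Fin 5} {σ : Equiv.Perm (Fin 5)} (hσ2 : Involutive σ) (hσ0 : σ 0 = 0)
      (hij : j ≠ i) (hσ : ∀ l, l ≠ 0 → K j l = K i (σ l)) (l : Fin 5) : e (σ l) = -e l :=
    hσ2.apply_eq_neg_of_injective_sub (.ofBijective e hE) he0 hσ0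
      (hsub hij hKj (hrow_of_pair hσ2 hσ0 hσ)).injective l
  have hzero (l : Fin 5) : e (τ l) - e (τ' l) = 0 := by
    rw [hneg hτ2 hτ0 h1 hpair, hneg hτ'2 hτ'0 h2 hpair', sub_self]
  exact absurd ((hsub h3 (hrow_of_pair hτ2 hτ0 hpair) (hrow_of_pair hτ'2 hτ'0 hpair')).injective
    ((hzero 0).trans (hzero 1).symm)) (by decide)
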